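/- Let 1 ≤ p < r ≤ ∞ and let m : (0,1] → ℂ be continuous. Suppose there exists N ≥ 0 such that for every g ∈ AC_r the product mg (extended by (mg)(0) = 0) belongs to AC_p and ‖(mg)'‖_p ≤ N ‖g'‖_r. Then for every α ∈ (0,1], there exists m' ∈ L^p[α,1] with m(t) = m(α) + ∫_α^t m'(s) ds for all t ∈ [α,1] (so m is absolutely continuous on [α,1]), and ‖m'·χ_{[α,1]}‖_p ≤ N·α^{−1/r'}, where r' is the conjugate exponent of r. -/

import Mathlib

open MeasureTheory Set
open scoped ENNReal NNReal

/-- The Lebesgue measure restricted to `[0,1]`. -/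
noncomputable def mu01 : Measure ℝ := volume.restrict (Set.Icc (0 : ℝ) 1)

/-!
Test the multiplier on the ramp `g(t) = min (t / α) 1`, whose derivative is `α⁻¹ χ_{(0,α]}`.
Since `g = 1` on `[α,1]`, the product `mg` coincides with `m` there, so the derivative `D` of
`mg ∈ AC_p` is a derivative of `m` on `[α,1]`, and
`‖D‖_p ≤ N ‖g'‖_r = N α⁻¹ α^{1/r} = N α^{-1/r'}`.
-/

instance : IsFiniteMeasure mu01 :=
  ⟨by simp [mu01, Real.volume_Icc]⟩

lemma mu01_Ioc_zero {α : ℝ} (hα : α ≤ 1) : mu01 (Ioc 0 α) = ENNReal.ofReal α := by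
  rw [mu01, Measure.restrict_apply measurableSet_Ioc,
    inter_eq_left.mpr (Ioc_subset_Icc_self.trans (Icc_subset_Icc_right hα)),
    Real.volume_Ioc, sub_zero]

lemma ENNReal.toReal_inv_eq_one_sub_of_inv_add_inv {r q : ℝ≥0∞} (hrq : r⁻¹ + q⁻¹ = 1) :
    (q⁻¹).toReal = 1 - r.toReal⁻¹ := by
  have hr : r⁻¹ ≠ ∞ := ne_top_of_le_ne_top ENNReal.one_ne_top (hrq ▸ le_self_add)
  have hq : q⁻¹ ≠ ∞ := ne_top_of_le_ne_top ENNReal.one_ne_top (hrq ▸ le_add_self)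
  have := congrArg ENNReal.toReal hrq
  rw [ENNReal.toReal_add hr hq, ENNReal.toReal_inv, ENNReal.toReal_one] at this
  linarith

lemma setIntegral_Ioc_eq_add {E : Type*} [NormedAddCommGroup E] [NormedSpace ℝ E]
    {f : ℝ → E} {a b c : ℝ} (hab : a ≤ b) (hbc : b ≤ c) (hf : IntegrableOn f (Ioc a c)) :
    ∫ x in Ioc a c, f x = (∫ x in Ioc a b, f x) + ∫ x in Ioc b c, f x := by
  rw [← Ioc_union_Ioc_eq_Ioc hab hbc, setIntegral_union (Ioc_disjoint_Ioc_of_le le_rfl)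
    measurableSet_Ioc (hf.mono_set (Ioc_subset_Ioc_right hbc))
    (hf.mono_set (Ioc_subset_Ioc_left hab))]

noncomputable def rampDeriv (α : ℝ) : ℝ → ℂ := (Ioc 0 α).indicator fun _ ↦ (α : ℂ)⁻¹

noncomputable def ramp (α t : ℝ) : ℂ := ∫ s in Ioc 0 t, rampDeriv α s

lemma ramp_of_le {α t : ℝ} (hα : 0 < α) (ht : α ≤ t) : ramp α t = 1 := by
  rw [ramp, rampDeriv, setIntegral_indicator measurableSet_Ioc,
    inter_eq_right.mpr (Ioc_subset_Ioc_right ht), setIntegral_const,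
    Real.volume_real_Ioc_of_le hα.le, sub_zero, Complex.real_smul]
  exact mul_inv_cancel₀ (by exact_mod_cast hα.ne')

lemma eLpNorm_rampDeriv {r : ℝ≥0∞} (hr : r ≠ 0) {α : ℝ} (hα : α ∈ Ioc 0 1) :
    eLpNorm (rampDeriv α) r mu01 = ENNReal.ofReal (α⁻¹ * α ^ r.toReal⁻¹) := by
  rw [rampDeriv, eLpNorm_indicator_const' measurableSet_Ioc (by simp [mu01_Ioc_zero hα.2, hα.1])
    hr, mu01_Ioc_zero hα.2, ENNReal.ofReal_mul (by simp [hα.1.le]),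
    ENNReal.ofReal_rpow_of_pos hα.1, ← ofReal_norm, norm_inv, Complex.norm_real,
    Real.norm_of_nonneg hα.1.le, one_div]

lemma memLp_rampDeriv (r : ℝ≥0∞) {α : ℝ} (hα : α ≤ 1) : MemLp (rampDeriv α) r mu01 :=
  memLp_indicator_const r measurableSet_Ioc _ (Or.inr (by simp [mu01_Ioc_zero hα]))

theorem multiplier_ACr_ACp_necessary_general
    (p r q : ℝ≥0∞) (hp : 1 ≤ p) (hrq : r⁻¹ + q⁻¹ = 1)
    (m : ℝ → ℂ)
    (N : ℝ)
    (hmult : ∀ g g' : ℝ → ℂ, MemLp g' r mu01 →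
      (∀ t ∈ Set.Icc (0 : ℝ) 1, g t = ∫ s in Set.Ioc (0 : ℝ) t, g' s) →
      ∃ D : ℝ → ℂ, MemLp D p mu01 ∧
        (∀ t ∈ Set.Icc (0 : ℝ) 1,
          (if t = 0 then 0 else m t * g t) = ∫ s in Set.Ioc (0 : ℝ) t, D s) ∧
        eLpNorm D p mu01 ≤ ENNReal.ofReal N * eLpNorm g' r mu01) :
    ∀ α ∈ Set.Ioc (0 : ℝ) 1, ∃ m' : ℝ → ℂ,
      MemLp m' p (volume.restrict (Set.Icc α 1)) ∧
      (∀ t ∈ Set.Icc α 1, m t = m α + ∫ s in Set.Ioc α t, m' s) ∧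
      eLpNorm ((Set.Icc α 1).indicator m') p mu01 ≤
        ENNReal.ofReal (N * α ^ (-(q⁻¹).toReal)) := by
  intro α hα
  obtain ⟨D, hDp, hmgD, hDnorm⟩ := hmult (ramp α) (rampDeriv α) (memLp_rampDeriv r hα.2)
    fun _ _ ↦ rfl
  have hmD : ∀ t ∈ Icc α 1, m t = ∫ s in Ioc 0 t, D s := fun t ht ↦ by
    have ht0 : 0 < t := hα.1.trans_le ht.1
    simpa [ht0.ne', ramp_of_le hα.1 ht.1] using hmgD t ⟨ht0.le, ht.2⟩
  have hD : IntegrableOn D (Icc 0 1) := hDp.integrable hp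
  have hr : r ≠ 0 := by rintro rfl; simp at hrq
  refine ⟨D, hDp.mono_measure (Measure.restrict_mono (Icc_subset_Icc_left hα.1.le) le_rfl),
    fun t ht ↦ ?_, ?_⟩
  · rw [hmD t ht, hmD α ⟨le_rfl, hα.2⟩, setIntegral_Ioc_eq_add hα.1.le ht.1
      (hD.mono_set (Ioc_subset_Icc_self.trans (Icc_subset_Icc_right ht.2)))]
  · calc eLpNorm ((Icc α 1).indicator D) p mu01
        ≤ eLpNorm D p mu01 := eLpNorm_indicator_le D
      _ ≤ ENNReal.ofReal N * eLpNorm (rampDeriv α) r mu01 := hDnorm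
      _ = ENNReal.ofReal (N * α ^ (-(q⁻¹).toReal)) := by
        rw [eLpNorm_rampDeriv hr hα, ← ENNReal.ofReal_mul' (by have := hα.1; positivity),
          ENNReal.toReal_inv_eq_one_sub_of_inv_add_inv hrq, neg_sub, Real.rpow_sub hα.1,
          Real.rpow_one, div_eq_inv_mul]

/-- Theorem 5.  Let `1 ≤ p < r ≤ ∞`, let `r'` (here `q`) be
the conjugate exponent of `r`, and let `m` be continuous on `(0,1]`.  Suppose
there is `N ≥ 0` such that for every `g ∈ AC_r` the product `mg` (extended by
`(mg)(0) = 0`) belongs to `AC_p` with `‖(mg)'‖_p ≤ N ‖g'‖_r`.  Then for every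
`α ∈ (0,1]`, `m` is absolutely continuous on `[α,1]` with derivative
`m' ∈ L^p[α,1]` and `‖m'·χ_{[α,1]}‖_p ≤ N·α^{−1/r'}`. -/
theorem multiplier_ACr_ACp_necessary
    (p r q : ℝ≥0∞) (hp : 1 ≤ p) (hpr : p < r) (hrq : r⁻¹ + q⁻¹ = 1)
    (m : ℝ → ℂ)
    (hmc : ContinuousOn m (Set.Ioc (0 : ℝ) 1))
    (N : ℝ) (hN : 0 ≤ N)
    (hmult : ∀ g g' : ℝ → ℂ, MemLp g' r mu01 →
      (∀ t ∈ Set.Icc (0 : ℝ) 1, g t = ∫ s in Set.Ioc (0 : ℝ) t, g' s) →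
      ∃ D : ℝ → ℂ, MemLp D p mu01 ∧
        (∀ t ∈ Set.Icc (0 : ℝ) 1,
          (if t = 0 then 0 else m t * g t) = ∫ s in Set.Ioc (0 : ℝ) t, D s) ∧
        eLpNorm D p mu01 ≤ ENNReal.ofReal N * eLpNorm g' r mu01) :
    ∀ α ∈ Set.Ioc (0 : ℝ) 1, ∃ m' : ℝ → ℂ,
      MemLp m' p (volume.restrict (Set.Icc α 1)) ∧
      (∀ t ∈ Set.Icc α 1, m t = m α + ∫ s in Set.Ioc α t, m' s) ∧
      eLpNorm ((Set.Icc α 1).indicator m') p mu01 ≤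
        ENNReal.ofReal (N * α ^ (-(q⁻¹).toReal)) :=
  multiplier_ACr_ACp_necessary_general p r q hp hrq m N hmult
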